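/- arXiv:1406.1957 — 2 statements merged into one kernel-verified Lean document; each statement's English description precedes it below -/
import Mathlib

section
/- Let Φ be a homogeneous Poisson point process on ℝ² with intensity λ > 0, let ℓ(r) = (Kr)^β with K > 0 and β > 2, and let {S_X} be i.i.d. positive random variables with E[S^(2/β)] < ∞, independent of Φ. Then the point process Θ = {ℓ(|X|)/S_X : X ∈ Φ} on (0,∞) is an inhomogeneous Poisson point process with intensity measure Λ([0,t)) = a·t^(2/β), where a = λπE[S^(2/β)]/K². -/
open Real MeasureTheory Set ENNReal

/-- `e^{−x}` for extended nonnegative `x`, with `e^{−∞} = 0`. -/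
noncomputable def expNeg (x : ℝ≥0∞) : ℝ≥0∞ :=
  if x = ⊤ then 0 else ENNReal.ofReal (Real.exp (-x.toReal))

/-- `N` is a Poisson point process on `E` with intensity measure `Λ`, characterized by
its Laplace functional `E[exp(−∫ f dN)] = exp(−∫ (1 − e^{−f}) dΛ)`. -/
def IsPoissonPP {Ω E : Type*} [MeasurableSpace Ω] [MeasurableSpace E]
    (P : Measure Ω) (N : Ω → Measure E) (Λ : Measure E) : Prop :=
  ∀ f : E → ℝ≥0∞, Measurable f →
    ∫⁻ ω, expNeg (∫⁻ y, f y ∂(N ω)) ∂P = expNeg (∫⁻ y, 1 - expNeg (f y) ∂Λ)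

/-!
By the mapping theorem (a Laplace functional pulls back along a measurable map), `Θ` is the
image of the marked process under `(x, s) ↦ (K‖x‖)^β / s`, hence Poisson with the image
intensity. Integrating out the mark first, `{(x, s) : (K‖x‖)^β / s < t}` has `x`-section the
disc of radius `(ts)^{1/β} / K`, of area `π (ts)^{2/β} / K²`, and averaging over `s` gives
`λ π t^{2/β} E[S^{2/β}] / K²`.
-/

lemma measurable_expNeg : Measurable expNeg :=
  Measurable.ite (measurableSet_singleton ⊤) measurable_const (by fun_prop)

theorem IsPoissonPP.map {Ω E F : Type*} [MeasurableSpace Ω] [MeasurableSpace E]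
    [MeasurableSpace F] {P : Measure Ω} {N : Ω → Measure E} {Λ : Measure E}
    (hN : IsPoissonPP P N Λ) {T : E → F} (hT : Measurable T) :
    IsPoissonPP P (fun ω => (N ω).map T) (Λ.map T) := by
  intro f hf
  simp only [lintegral_map hf hT]
  rw [lintegral_map (f := fun y => 1 - expNeg (f y))
    (measurable_const.sub (measurable_expNeg.comp hf)) hT]
  exact hN (f ∘ T) (hf.comp hT)

lemma setOf_rpow_mul_norm_lt_eq_ball {E : Type*} [SeminormedAddCommGroup E] {K β r : ℝ}
    (hK : 0 < K) (hβ : 0 < β) (hr : 0 ≤ r) :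
    {x : E | (K * ‖x‖) ^ β < r} = Metric.ball 0 (r ^ β⁻¹ / K) := by
  ext x
  rw [mem_ofPred_eq, mem_ball_zero_iff, lt_div_iff₀ hK, mul_comm,
    lt_rpow_inv_iff_of_pos (by positivity) hr hβ]

lemma volume_setOf_rpow_mul_norm_lt {K β r : ℝ} (hK : 0 < K) (hβ : 0 < β) (hr : 0 ≤ r) :
    volume {x : EuclideanSpace ℝ (Fin 2) | (K * ‖x‖) ^ β < r} =
      ENNReal.ofReal (π * r ^ (2 / β) / K ^ 2) := by
  have hpow : (r ^ β⁻¹) ^ 2 = r ^ (2 / β) := by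
    rw [← Real.rpow_natCast, ← rpow_mul hr, Nat.cast_ofNat, inv_mul_eq_div]
  rw [setOf_rpow_mul_norm_lt_eq_ball hK hβ hr, EuclideanSpace.volume_ball_fin_two,
    ← ENNReal.ofReal_pow (div_nonneg (rpow_nonneg hr _) hK.le),
    ← ENNReal.ofReal_mul (by positivity), div_pow, hpow, mul_comm, mul_div_assoc]

lemma preimage_pathLoss_Ico_section {E : Type*} [SeminormedAddCommGroup E] {K β t s : ℝ}
    (hK : 0 ≤ K) (hs : 0 < s) :
    (fun x : E => (x, s)) ⁻¹' ((fun p : E × ℝ => (K * ‖p.1‖) ^ β / p.2) ⁻¹' Ico 0 t) =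
      {x : E | (K * ‖x‖) ^ β < t * s} := by
  ext x
  simp only [mem_preimage, mem_Ico, mem_ofPred_eq, div_lt_iff₀ hs]
  exact and_iff_right (div_nonneg (by positivity) hs.le)

theorem map_pathLoss_prod_apply_Ico {c K β t : ℝ} (hc : 0 ≤ c) (hK : 0 < K) (hβ : 0 < β)
    (ht : 0 ≤ t) (μS : Measure ℝ) [SFinite μS] (hSpos : μS (Iic 0) = 0) :
    ((ENNReal.ofReal c • (volume : Measure (EuclideanSpace ℝ (Fin 2)))).prod μS).map
        (fun p => (K * ‖p.1‖) ^ β / p.2) (Ico 0 t) =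
      ENNReal.ofReal (c * π * t ^ (2 / β) / K ^ 2) * ∫⁻ s, ENNReal.ofReal (s ^ (2 / β)) ∂μS := by
  have hT : Measurable fun p : EuclideanSpace ℝ (Fin 2) × ℝ => (K * ‖p.1‖) ^ β / p.2 := by
    fun_prop
  have hS : ∀ᵐ s ∂μS, 0 < s :=
    (measure_eq_zero_iff_ae_notMem.mp hSpos).mono fun _ hs => lt_of_not_ge hs
  rw [Measure.map_apply hT measurableSet_Ico, Measure.prod_apply_symm (hT measurableSet_Ico),
    ← lintegral_const_mul _ (by fun_prop)]
  refine lintegral_congr_ae (hS.mono fun s hs => ?_)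
  dsimp only
  rw [preimage_pathLoss_Ico_section hK.le hs, Measure.smul_apply,
    volume_setOf_rpow_mul_norm_lt hK hβ (by positivity), smul_eq_mul, ← ENNReal.ofReal_mul hc,
    ← ENNReal.ofReal_mul (by positivity), mul_rpow ht hs.le]
  congr 1
  ring

theorem propagation_process_is_poisson_general
    {Ω : Type*} [MeasurableSpace Ω] (P : Measure Ω)
    (lam K β : ℝ) (hlam : 0 < lam) (hK : 0 < K) (hβ : 2 < β)
    (μS : Measure ℝ) [IsProbabilityMeasure μS] (hSpos : μS (Set.Iic 0) = 0)
    (hSmom : ∫⁻ s, ENNReal.ofReal (s ^ (2 / β)) ∂μS ≠ ⊤)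
    (N : Ω → Measure (EuclideanSpace ℝ (Fin 2) × ℝ))
    (hN : IsPoissonPP P N
      ((ENNReal.ofReal lam • (volume : Measure (EuclideanSpace ℝ (Fin 2)))).prod μS)) :
    ∃ ΛΘ : Measure ℝ,
      IsPoissonPP P (fun ω => (N ω).map fun p => (K * ‖p.1‖) ^ β / p.2) ΛΘ ∧
      ∀ t : ℝ, 0 ≤ t →
        ΛΘ (Set.Ico 0 t) =
          ENNReal.ofReal
            ((lam * π * (∫⁻ s, ENNReal.ofReal (s ^ (2 / β)) ∂μS).toReal / K ^ 2) *
              t ^ (2 / β)) := by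
  refine ⟨_, hN.map (by fun_prop), fun t ht => ?_⟩
  rw [map_pathLoss_prod_apply_Ico hlam.le hK (by linarith) ht μS hSpos,
    show ∀ m : ℝ, lam * π * m / K ^ 2 * t ^ (2 / β) = lam * π * t ^ (2 / β) / K ^ 2 * m by
      intro m; ring,
    ENNReal.ofReal_mul (by positivity), ENNReal.ofReal_toReal hSmom]

/-- for a homogeneous Poisson process of intensity `λ` on `ℝ²` with
i.i.d. positive marks `S` (encoded, via the marking theorem, as a Poisson process `N`
on `ℝ² × ℝ` with intensity `(λ·vol) ⊗ μS`), the propagation process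
`Θ = {(K|X|)^β / S_X}` is a Poisson point process on `(0,∞)` whose intensity measure
satisfies `Λ_Θ([0,t)) = a t^{2/β}` with `a = λ π E[S^{2/β}] / K²`. -/
theorem propagation_process_is_poisson
    {Ω : Type*} [MeasurableSpace Ω] (P : Measure Ω) [IsProbabilityMeasure P]
    (lam K β : ℝ) (hlam : 0 < lam) (hK : 0 < K) (hβ : 2 < β)
    (μS : Measure ℝ) [IsProbabilityMeasure μS] (hSpos : μS (Set.Iic 0) = 0)
    (hSmom : ∫⁻ s, ENNReal.ofReal (s ^ (2 / β)) ∂μS ≠ ⊤)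
    (N : Ω → Measure (EuclideanSpace ℝ (Fin 2) × ℝ))
    (hN : IsPoissonPP P N
      ((ENNReal.ofReal lam • (volume : Measure (EuclideanSpace ℝ (Fin 2)))).prod μS)) :
    ∃ ΛΘ : Measure ℝ,
      IsPoissonPP P (fun ω => (N ω).map fun p => (K * ‖p.1‖) ^ β / p.2) ΛΘ ∧
      ∀ t : ℝ, 0 ≤ t →
        ΛΘ (Set.Ico 0 t) =
          ENNReal.ofReal
            ((lam * π * (∫⁻ s, ENNReal.ofReal (s ^ (2 / β)) ∂μS).toReal / K ^ 2) *
              t ^ (2 / β)) :=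
  propagation_process_is_poisson_general P lam K β hlam hK hβ μS hSpos hSmom N hN
end

section
/- Let 0 ≤ α < 1 and θ > −α, let U₁, U₂, … be independent random variables with Uᵢ ~ Beta(1−α, θ+iα), and define Ṽ₁ = U₁ and Ṽᵢ = (1−U₁)⋯(1−U_{i−1})Uᵢ for i ≥ 2. Then ∑_{i=1}^∞ Ṽᵢ = 1 almost surely. -/
/-!
Write `Rₙ = ∏_{j<n} (1 - Uⱼ)` for the length of stick left after `n` breaks; the partial sums of
the `Ṽᵢ` telescope to `1 - Rₙ`, so it suffices that `Rₙ → 0` almost surely. The `Rₙ` decrease,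
and by independence `E Rₙ = ∏_{j<n} E(1 - Uⱼ) = ∏_{j<n} (1 - (1-α)/(1+θ+jα))`, which tends to
zero because `∑ⱼ 1/(1+θ+jα)` diverges. Hence the a.s. limit of `Rₙ` has expectation zero.
-/

open Real MeasureTheory Set ProbabilityTheory Finset Filter
open scoped Topology

noncomputable def betaMeasure' (a b : ℝ) : Measure ℝ :=
  (volume.restrict (Set.Ioo (0 : ℝ) 1)).withDensity fun x =>
    ENNReal.ofReal
      (Real.Gamma (a + b) / (Real.Gamma a * Real.Gamma b) * x ^ (a - 1) * (1 - x) ^ (b - 1))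

lemma integral_Ioo_rpow_mul_one_sub_rpow {a b : ℝ} (ha : 0 < a) (hb : 0 < b) :
    ∫ x in Ioo (0 : ℝ) 1, x ^ (a - 1) * (1 - x) ^ (b - 1) = beta a b := by
  have hcast : Complex.betaIntegral a b =
      ↑(∫ x in (0 : ℝ)..1, x ^ (a - 1) * (1 - x) ^ (b - 1)) := by
    rw [Complex.betaIntegral, ← intervalIntegral.integral_ofReal]
    refine intervalIntegral.integral_congr fun x hx => ?_
    rw [Set.uIcc_of_le zero_le_one] at hx
    push_cast [Complex.ofReal_cpow hx.1, Complex.ofReal_cpow (sub_nonneg.2 hx.2)]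
    rfl
  rw [beta_eq_betaIntegralReal a b ha hb, hcast, Complex.ofReal_re,
    intervalIntegral.integral_of_le zero_le_one, integral_Ioc_eq_integral_Ioo]

lemma beta_add_one_right {a b : ℝ} (ha : 0 < a) (hb : 0 < b) :
    beta a (b + 1) = b / (a + b) * beta a b := by
  have hab : 0 < a + b := by linarith
  rw [beta, beta, Gamma_add_one hb.ne', ← add_assoc, Gamma_add_one hab.ne']
  have := (Gamma_pos_of_pos hab).ne'
  field_simp

lemma ae_mem_Ioo_betaMeasure' (a b : ℝ) : ∀ᵐ x ∂betaMeasure' a b, x ∈ Set.Ioo 0 1 :=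
  (withDensity_absolutelyContinuous _ _).ae_le (ae_restrict_mem measurableSet_Ioo)

lemma integral_one_sub_betaMeasure' {a b : ℝ} (ha : 0 < a) (hb : 0 < b) :
    ∫ x, (1 - x) ∂betaMeasure' a b = b / (a + b) := by
  have hconst : Gamma (a + b) / (Gamma a * Gamma b) = (beta a b)⁻¹ := by rw [beta, inv_div]
  rw [betaMeasure', integral_withDensity_eq_integral_toReal_smul (by fun_prop)
    (ae_of_all _ fun _ => ENNReal.ofReal_lt_top), hconst]
  calc _ = ∫ x in Ioo (0 : ℝ) 1, (beta a b)⁻¹ * (x ^ (a - 1) * (1 - x) ^ (b + 1 - 1)) := by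
        refine setIntegral_congr_fun measurableSet_Ioo fun x hx => ?_
        have hx1 : 0 < 1 - x := sub_pos.2 hx.2
        have hdens : 0 ≤ (beta a b)⁻¹ * x ^ (a - 1) * (1 - x) ^ (b - 1) :=
          mul_nonneg (mul_nonneg (inv_nonneg.2 (beta_pos ha hb).le) (rpow_nonneg hx.1.le _))
            (rpow_nonneg hx1.le _)
        rw [ENNReal.toReal_ofReal hdens, smul_eq_mul, add_sub_cancel_right, rpow_sub_one hx1.ne']
        field_simp
    _ = b / (a + b) := by
        rw [integral_const_mul, integral_Ioo_rpow_mul_one_sub_rpow ha (by linarith),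
          beta_add_one_right ha hb]
        have := (beta_pos ha hb).ne'
        field_simp

lemma not_summable_div_add_mul {A B c : ℝ} (hA : 0 < A) (hB : 0 < B) (hc : 0 ≤ c) :
    ¬Summable fun j : ℕ => A / (B + j * c) := by
  intro hsum
  have hharm : Summable fun j : ℕ => A / (B + c) * (1 / ((j + 1 : ℕ) : ℝ)) := by
    refine hsum.of_nonneg_of_le (fun j => by positivity) fun j => ?_
    rw [mul_one_div, div_div, Nat.cast_succ]
    exact div_le_div_of_nonneg_left hA.le (by positivity) (by nlinarith [j.cast_nonneg (α := ℝ)])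
  exact Real.not_summable_one_div_natCast
    ((summable_nat_add_iff 1).1 ((summable_mul_left_iff (by positivity)).1 hharm))

lemma tendsto_prod_range_one_sub_of_not_summable {a : ℕ → ℝ} (h0 : ∀ j, 0 ≤ a j)
    (h1 : ∀ j, a j ≤ 1) (hsum : ¬Summable a) :
    Tendsto (fun n => ∏ j ∈ range n, (1 - a j)) atTop (𝓝 0) := by
  have hexp : Tendsto (fun n => exp (-∑ j ∈ range n, a j)) atTop (𝓝 0) :=
    tendsto_exp_atBot.comp <| tendsto_neg_atTop_atBot.comp <|
      (not_summable_iff_tendsto_nat_atTop_of_nonneg h0).1 hsum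
  refine squeeze_zero (fun n => prod_nonneg fun j _ => sub_nonneg.2 (h1 j)) (fun n => ?_) hexp
  rw [← sum_neg_distrib, exp_sum]
  exact prod_le_prod (fun j _ => sub_nonneg.2 (h1 j))
    fun j _ => by linarith [add_one_le_exp (-a j)]

lemma sum_range_prod_one_sub_mul (u : ℕ → ℝ) (n : ℕ) :
    ∑ i ∈ range n, (∏ j ∈ range i, (1 - u j)) * u i = 1 - ∏ j ∈ range n, (1 - u j) := by
  induction n with
  | zero => simp
  | succ n ih => rw [sum_range_succ, ih, prod_range_succ]; ring

lemma hasSum_prod_range_one_sub_mul {u : ℕ → ℝ} (hu : ∀ i, u i ∈ Set.Icc 0 1)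
    (hprod : Tendsto (fun n => ∏ j ∈ range n, (1 - u j)) atTop (𝓝 0)) :
    HasSum (fun i => (∏ j ∈ range i, (1 - u j)) * u i) 1 := by
  refine (hasSum_iff_tendsto_nat_of_nonneg (fun i => mul_nonneg
    (prod_nonneg fun j _ => sub_nonneg.2 (hu j).2) (hu i).1) 1).2 ?_
  simp_rw [sum_range_prod_one_sub_mul]
  simpa using tendsto_const_nhds.sub hprod

namespace ProbabilityTheory

variable {Ω : Type*} [MeasurableSpace Ω] {μ : Measure Ω}

lemma ae_tendsto_zero_of_antitone_of_tendsto_integral {X : ℕ → Ω → ℝ}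
    (hint : ∀ n, Integrable (X n) μ) (hnonneg : ∀ᵐ ω ∂μ, ∀ n, 0 ≤ X n ω)
    (hanti : ∀ᵐ ω ∂μ, Antitone fun n => X n ω)
    (hlim : Tendsto (fun n => ∫ ω, X n ω ∂μ) atTop (𝓝 0)) :
    ∀ᵐ ω ∂μ, Tendsto (fun n => X n ω) atTop (𝓝 0) := by
  set L : Ω → ℝ := fun ω => ⨅ n, X n ω
  have hL : ∀ᵐ ω ∂μ, 0 ≤ L ω ∧ (∀ n, L ω ≤ X n ω) ∧
      Tendsto (fun n => X n ω) atTop (𝓝 (L ω)) := by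
    filter_upwards [hnonneg, hanti] with ω h0 hω
    have hbdd : BddBelow (range fun n => X n ω) := ⟨0, forall_mem_range.2 h0⟩
    exact ⟨le_ciInf h0, fun n => ciInf_le hbdd n, tendsto_atTop_ciInf hω hbdd⟩
  have hLint : Integrable L μ := by
    refine (hint 0).mono' (AEMeasurable.iInf fun n => (hint n).aemeasurable).aestronglyMeasurable ?_
    filter_upwards [hL] with ω hω
    rw [norm_of_nonneg hω.1]
    exact hω.2.1 0
  have hL0 : ∫ ω, L ω ∂μ = 0 := by
    refine le_antisymm (ge_of_tendsto' hlim fun n => integral_mono_ae hLint (hint n) ?_)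
      (integral_nonneg_of_ae (by filter_upwards [hL] with ω hω using hω.1))
    filter_upwards [hL] with ω hω using hω.2.1 n
  filter_upwards [hL, (integral_eq_zero_iff_of_nonneg_ae
    (by filter_upwards [hL] with ω hω using hω.1) hLint).1 hL0] with ω hω hω0
  simpa [hω0] using hω.2.2

lemma iIndepFun.integral_prod_range {Y : ℕ → Ω → ℝ} (hY : iIndepFun Y μ)
    (hm : ∀ j, Measurable (Y j)) (n : ℕ) :
    ∫ ω, ∏ j ∈ range n, Y j ω ∂μ = ∏ j ∈ range n, ∫ ω, Y j ω ∂μ := by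
  have hval : Function.Injective ((↑) : range n → ℕ) := Subtype.val_injective
  have h := (hY.precomp hval).integral_fun_prod_eq_prod_integral
    fun j => (hm j).aestronglyMeasurable
  rwa [prod_coe_sort (range n) fun j => ∫ ω, Y j ω ∂μ,
    integral_congr_ae (ae_of_all _ fun ω => prod_coe_sort (range n) fun j => Y j ω)] at h

lemma iIndepFun.ae_tendsto_prod_range_zero {Y : ℕ → Ω → ℝ} (hY : iIndepFun Y μ)
    (hm : ∀ j, Measurable (Y j)) (h01 : ∀ᵐ ω ∂μ, ∀ j, Y j ω ∈ Set.Icc 0 1)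
    (hmean : Tendsto (fun n => ∏ j ∈ range n, ∫ ω, Y j ω ∂μ) atTop (𝓝 0)) :
    ∀ᵐ ω ∂μ, Tendsto (fun n => ∏ j ∈ range n, Y j ω) atTop (𝓝 0) := by
  have := hY.isProbabilityMeasure
  have hbound (n : ℕ) : ∀ᵐ ω ∂μ, ∏ j ∈ range n, Y j ω ∈ Set.Icc 0 1 := by
    filter_upwards [h01] with ω hω
    exact ⟨prod_nonneg fun j _ => (hω j).1, prod_le_one (fun j _ => (hω j).1) fun j _ => (hω j).2⟩
  refine ae_tendsto_zero_of_antitone_of_tendsto_integral (fun n => ?_)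
    (ae_all_iff.2 fun n => ?_) ?_ ?_
  · refine .of_bound (Finset.measurable_fun_prod _ fun j _ => hm j).aestronglyMeasurable 1 ?_
    filter_upwards [hbound n] with ω hω
    rw [norm_of_nonneg hω.1]
    exact hω.2
  · filter_upwards [hbound n] with ω hω using hω.1
  · filter_upwards [h01] with ω hω
    exact antitone_nat_of_succ_le fun n => by
      rw [prod_range_succ]
      exact mul_le_of_le_one_right (prod_nonneg fun j _ => (hω j).1) (hω n).2
  · simpa only [hY.integral_prod_range hm] using hmean

end ProbabilityTheory

theorem stick_breaking_sums_to_one_general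
    {Ω : Type*} [MeasurableSpace Ω] (P : Measure Ω)
    (α θ : ℝ) (hα0 : 0 ≤ α) (hα1 : α < 1) (hθ : -α < θ)
    (U : ℕ → Ω → ℝ) (hUm : ∀ i, Measurable (U i))
    (hIndep : iIndepFun U P)
    (hLaw : ∀ i : ℕ, Measure.map (U i) P = betaMeasure' (1 - α) (θ + ((i : ℝ) + 1) * α)) :
    ∀ᵐ ω ∂P, ∑' i : ℕ, (∏ j ∈ Finset.range i, (1 - U j ω)) * U i ω = 1 := by
  have ha : 0 < 1 - α := by linarith
  have hb (i : ℕ) : 0 < θ + ((i : ℝ) + 1) * α := by nlinarith [i.cast_nonneg (α := ℝ)]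
  have hU : ∀ᵐ ω ∂P, ∀ i, U i ω ∈ Set.Icc 0 1 := ae_all_iff.2 fun i =>
    ae_of_ae_map (hUm i).aemeasurable <| by
      rw [hLaw i]
      exact (ae_mem_Ioo_betaMeasure' _ _).mono fun x hx => Set.Ioo_subset_Icc_self hx
  have hmean (j : ℕ) :
      ∫ ω, 1 - U j ω ∂P = 1 - (1 - α) / ((1 - α) + (θ + ((j : ℝ) + 1) * α)) := by
    rw [← integral_map (hUm j).aemeasurable (by fun_prop), hLaw j,
      integral_one_sub_betaMeasure' ha (hb j)]
    have := hb j
    field_simp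
    ring
  have hdiv : ¬Summable fun j : ℕ => (1 - α) / ((1 - α) + (θ + ((j : ℝ) + 1) * α)) := by
    convert not_summable_div_add_mul ha (by linarith : 0 < 1 + θ) hα0 using 4
    ring
  have hR := (hIndep.comp (fun _ x => 1 - x) fun _ => by fun_prop).ae_tendsto_prod_range_zero
    (fun j => (hUm j).const_sub 1)
    (by filter_upwards [hU] with ω hω j using ⟨sub_nonneg.2 (hω j).2, sub_le_self _ (hω j).1⟩)
    (by
      simp only [Function.comp_apply, hmean]
      exact tendsto_prod_range_one_sub_of_not_summable
        (fun j => div_nonneg ha.le (by linarith [hb j]))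
        (fun j => div_le_one_of_le₀ (by linarith [hb j]) (by linarith [hb j])) hdiv)
  filter_upwards [hU, hR] with ω hω hlim
  exact (hasSum_prod_range_one_sub_mul hω hlim).tsum_eq

/-- stick-breaking weights of `PD(α,θ)` sum to one almost surely.
Here `U i` is the `(i+1)`-st stick-breaking variable, `U i ~ B(1−α, θ+(i+1)α)`,
and `Ṽ_{i+1} = (1−U 0)⋯(1−U (i−1)) · U i`. -/
theorem stick_breaking_sums_to_one
    {Ω : Type*} [MeasurableSpace Ω] (P : Measure Ω) [IsProbabilityMeasure P]
    (α θ : ℝ) (hα0 : 0 ≤ α) (hα1 : α < 1) (hθ : -α < θ)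
    (U : ℕ → Ω → ℝ) (hUm : ∀ i, Measurable (U i))
    (hIndep : iIndepFun U P)
    (hLaw : ∀ i : ℕ, Measure.map (U i) P = betaMeasure' (1 - α) (θ + ((i : ℝ) + 1) * α)) :
    ∀ᵐ ω ∂P, ∑' i : ℕ, (∏ j ∈ Finset.range i, (1 - U j ω)) * U i ω = 1 :=
  stick_breaking_sums_to_one_general P α θ hα0 hα1 hθ U hUm hIndep hLaw
end
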